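/- Let G be a finite abelian group whose order is N = p·q for distinct primes p, q (more generally, with p-primary part G_p and q-primary part G_q such that G = G_p × G_q), equipped with a nonsingular symmetric bilinear form λ : G × G → ℚ/ℤ. Then every metabolizer M of λ decomposes as M = M_p × M_q, where M_p = M ∩ G_p is a metabolizer of λ restricted to G_p and M_q = M ∩ G_q is a metabolizer of λ restricted to G_q. -/

import Mathlib

/-!
An element killed by two coprime integers is zero, so the form pairs the `p`-primary part
trivially with the `q`-primary part. By Bézout, `u p^k + v q^m = 1`, the `p`-component of
`x = a + b` is the multiple `(v q^m) • x`, so every subgroup `M` splits as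
`(M ∩ G_p) ⊕ (M ∩ G_q)`. With this splitting and the orthogonality, an element of `G_p`
annihilating `M ∩ G_p` annihilates all of `M`, hence lies in `M`.
-/

theorem eq_zero_of_coprime_of_nsmul_eq_zero {A : Type*} [AddMonoid A] {n m : ℕ}
    (h : n.Coprime m) {t : A} (hn : n • t = 0) (hm : m • t = 0) : t = 0 :=
  AddMonoid.addOrderOf_eq_one_iff.mp <|
    Nat.eq_one_of_dvd_coprimes h (addOrderOf_dvd_of_nsmul_eq_zero hn)
      (addOrderOf_dvd_of_nsmul_eq_zero hm)

theorem AddMonoidHom.map_eq_zero_of_coprime {G H R : Type*} [AddCommMonoid G]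
    [AddCommMonoid H] [AddCommMonoid R] (B : G →+ H →+ R) {n m : ℕ} (h : n.Coprime m)
    {x : G} {y : H} (hx : n • x = 0) (hy : m • y = 0) : B x y = 0 := by
  refine eq_zero_of_coprime_of_nsmul_eq_zero h ?_ ?_
  · rw [← AddMonoidHom.nsmul_apply, ← map_nsmul, hx, map_zero, AddMonoidHom.zero_apply]
  · rw [← map_nsmul, hy, map_zero]

theorem mem_zmultiples_add_of_coprime {G : Type*} [AddCommGroup G] {n m : ℕ}
    (h : n.Coprime m) {a b : G} (ha : n • a = 0) (hb : m • b = 0) :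
    a ∈ AddSubgroup.zmultiples (a + b) := by
  obtain ⟨u, v, huv⟩ := Nat.isCoprime_iff_coprime.mpr h
  refine ⟨v * m, ?_⟩
  calc (v * m) • (a + b) = (u * n + v * m) • a - u • (n • a) + v • (m • b) := by
        simp only [smul_add, add_smul, mul_smul, natCast_zsmul]; abel
    _ = a := by rw [huv, ha, hb, one_smul, smul_zero, smul_zero, sub_zero, add_zero]

theorem AddSubgroup.eq_inf_sup_inf_of_coprime_torsion {G : Type*} [AddCommGroup G] {p q : ℕ}
    (hpq : p.Coprime q) {A B : AddSubgroup G} (hA : ∀ x ∈ A, ∃ k : ℕ, p ^ k • x = 0)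
    (hB : ∀ x ∈ B, ∃ k : ℕ, q ^ k • x = 0) (hAB : A ⊔ B = ⊤) (M : AddSubgroup G) :
    M = M ⊓ A ⊔ M ⊓ B := by
  refine le_antisymm (fun x hx => ?_) (sup_le inf_le_left inf_le_left)
  obtain ⟨a, ha, b, hb, rfl⟩ := mem_sup.mp (hAB ▸ mem_top x)
  obtain ⟨k, hk⟩ := hA a ha
  obtain ⟨j, hj⟩ := hB b hb
  have haM : a ∈ M := zmultiples_le.mpr hx (mem_zmultiples_add_of_coprime (hpq.pow k j) hk hj)
  have hbM : b ∈ M := by simpa using M.sub_mem hx haM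
  exact add_mem_sup ⟨haM, ha⟩ ⟨hbM, hb⟩

def IsMetabolizerIn {G R : Type*} [AddCommGroup G] [AddCommMonoid R] (B : G →+ G →+ R)
    (S M : AddSubgroup G) : Prop :=
  ∀ z ∈ S, (∀ y ∈ M, B z y = 0) ↔ z ∈ M

theorem IsMetabolizerIn.inf_of_le_sup {G R : Type*} [AddCommGroup G] [AddCommMonoid R]
    {B : G →+ G →+ R} {M A C : AddSubgroup G} (hM : IsMetabolizerIn B ⊤ M)
    (hdec : M ≤ M ⊓ A ⊔ M ⊓ C) (horth : ∀ a ∈ A, ∀ c ∈ C, B a c = 0) :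
    IsMetabolizerIn B A (M ⊓ A) := by
  intro z hz
  refine ⟨fun h => ⟨(hM z trivial).mp fun y hy => ?_, hz⟩,
    fun hzM y hy => (hM z trivial).mpr hzM.1 y hy.1⟩
  obtain ⟨a, ha, c, hc, rfl⟩ := AddSubgroup.mem_sup.mp (hdec hy)
  rw [map_add, h a ha, horth z hz c hc.2, add_zero]

theorem stmt7_general (G : Type*) [AddCommGroup G]
    (l : G → G → AddCircle (1 : ℚ))
    (haddl : ∀ x y z, l (x + y) z = l x z + l y z)
    (haddr : ∀ x y z, l x (y + z) = l x y + l x z)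
    (p q : ℕ) (hp : p.Prime) (hq : q.Prime) (hpq : p ≠ q)
    (Gp Gq : AddSubgroup G)
    (hGp : ∀ x : G, x ∈ Gp ↔ ∃ k : ℕ, (p ^ k) • x = 0)
    (hGq : ∀ x : G, x ∈ Gq ↔ ∃ k : ℕ, (q ^ k) • x = 0)
    (hsup : Gp ⊔ Gq = ⊤)
    (M : AddSubgroup G)
    (hM : {z : G | ∀ y ∈ M, l z y = 0} = (M : Set G)) :
    M = (M ⊓ Gp) ⊔ (M ⊓ Gq) ∧
    (∀ z ∈ Gp, ((∀ y ∈ M ⊓ Gp, l z y = 0) ↔ z ∈ M ⊓ Gp)) ∧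
    (∀ z ∈ Gq, ((∀ y ∈ M ⊓ Gq, l z y = 0) ↔ z ∈ M ⊓ Gq)) := by
  let B : G →+ G →+ AddCircle (1 : ℚ) :=
    AddMonoidHom.mk' (fun x => AddMonoidHom.mk' (l x) (haddr x))
      fun x y => AddMonoidHom.ext (haddl x y)
  have hco : p.Coprime q := (Nat.coprime_primes hp hq).mpr hpq
  have horth {r s : ℕ} (hrs : r.Coprime s) {x y : G} :
      (∃ k : ℕ, r ^ k • x = 0) → (∃ k : ℕ, s ^ k • y = 0) → B x y = 0
    | ⟨k, hk⟩, ⟨j, hj⟩ => B.map_eq_zero_of_coprime (hrs.pow k j) hk hj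
  have hdec := AddSubgroup.eq_inf_sup_inf_of_coprime_torsion hco (fun x => (hGp x).mp)
    (fun x => (hGq x).mp) hsup M
  have hMet : IsMetabolizerIn B ⊤ M := fun z _ => Set.ext_iff.mp hM z
  refine ⟨hdec, hMet.inf_of_le_sup hdec.le fun a ha c hc => ?_,
    hMet.inf_of_le_sup (hdec.le.trans_eq (sup_comm _ _)) fun c hc a ha => ?_⟩
  · exact horth hco ((hGp a).mp ha) ((hGq c).mp hc)
  · exact horth hco.symm ((hGq c).mp hc) ((hGp a).mp ha)

/-- For a nonsingular symmetric bilinear form on a finite abelian group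
`G = G_p × G_q` (internal direct sum of its `p`- and `q`-primary parts, `p ≠ q`
primes), every metabolizer `M` decomposes as `M = (M ∩ G_p) ⊔ (M ∩ G_q)`, where
`M ∩ G_p` is a metabolizer of the restriction of the form to `G_p`, and similarly
for `q`. -/
theorem stmt7 (G : Type*) [AddCommGroup G] [Fintype G]
    (l : G → G → AddCircle (1 : ℚ))
    (hsymm : ∀ x y, l x y = l y x)
    (haddl : ∀ x y z, l (x + y) z = l x z + l y z)
    (haddr : ∀ x y z, l x (y + z) = l x y + l x z)
    (hinj : ∀ x, (∀ y, l x y = 0) → x = 0)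
    (hsurj : ∀ f : G →+ AddCircle (1 : ℚ), ∃ x, ∀ y, l x y = f y)
    (p q : ℕ) (hp : p.Prime) (hq : q.Prime) (hpq : p ≠ q)
    (Gp Gq : AddSubgroup G)
    (hGp : ∀ x : G, x ∈ Gp ↔ ∃ k : ℕ, (p ^ k) • x = 0)
    (hGq : ∀ x : G, x ∈ Gq ↔ ∃ k : ℕ, (q ^ k) • x = 0)
    (hsup : Gp ⊔ Gq = ⊤) (hinf : Gp ⊓ Gq = ⊥)
    (M : AddSubgroup G)
    (hM : {z : G | ∀ y ∈ M, l z y = 0} = (M : Set G)) :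
    M = (M ⊓ Gp) ⊔ (M ⊓ Gq) ∧
    (∀ z ∈ Gp, ((∀ y ∈ M ⊓ Gp, l z y = 0) ↔ z ∈ M ⊓ Gp)) ∧
    (∀ z ∈ Gq, ((∀ y ∈ M ⊓ Gq, l z y = 0) ↔ z ∈ M ⊓ Gq)) :=
  stmt7_general G l haddl haddr p q hp hq hpq Gp Gq hGp hGq hsup M hM
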